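/- arXiv:2202.04911 — 9 statements merged into one kernel-verified Lean document; each statement's English description precedes it below -/
import Mathlib

section
/- Let f : ℝ → ℝ be a bijection with two-sided inverse g : ℝ → ℝ, and suppose there are K ≥ 1 and C ≥ 0 such that (1/K)·|x − y| − C ≤ |f(x) − f(y)| for all x, y ∈ ℝ. If (f(x) − x)/x → 0 as x → +∞, then (g(x) − x)/x → 0 as x → +∞. (This is the closure under inverses of the subgroup H of QI(ℝ₊).) -/
open Filter

theorem stmt_1 (f g : ℝ → ℝ)
    (hgf : Function.LeftInverse g f) (hfg : Function.RightInverse g f)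
    (K C : ℝ) (hK : 1 ≤ K) (hC : 0 ≤ C)
    (hlow : ∀ x y : ℝ, (1 / K) * |x - y| - C ≤ |f x - f y|)
    (hf : Tendsto (fun x : ℝ => (f x - x) / x) atTop (nhds 0)) :
    Tendsto (fun x : ℝ => (g x - x) / x) atTop (nhds 0) := by
  have hK0 : (0:ℝ) < K := lt_of_lt_of_le one_pos hK
  have hKinv : K * (1/K) = 1 := mul_one_div_cancel hK0.ne'
  have key : ∀ x, |g x - x| ≤ K * |f x - x| + K * C := by
    intro x
    have h := hlow (g x) x
    rw [hfg x, abs_sub_comm x (f x)] at h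
    nlinarith [abs_nonneg (g x - x), abs_nonneg (f x - x)]
  have hbound : Tendsto (fun x : ℝ => K * |(f x - x)/x| + K*C/x) atTop (nhds 0) := by
    have h1 : Tendsto (fun x : ℝ => K * |(f x - x)/x|) atTop (nhds 0) := by
      simpa using (hf.abs.const_mul K)
    have h2 : Tendsto (fun x : ℝ => K*C/x) atTop (nhds 0) :=
      Tendsto.div_atTop tendsto_const_nhds tendsto_id
    simpa using h1.add h2
  apply squeeze_zero_norm' ?_ hbound
  filter_upwards [eventually_gt_atTop 0] with x hx
  have hk := key x
  rw [Real.norm_eq_abs, abs_div, abs_of_pos hx, abs_div, abs_of_pos hx]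
  have heq : K * (|f x - x| / x) + K * C / x = (K * |f x - x| + K * C) / x := by ring
  rw [heq]
  exact div_le_div_of_nonneg_right hk hx.le |>.trans_eq rfl
end

section
/- Let g : ℝ → ℝ be a bijection with two-sided inverse g' : ℝ → ℝ which is a (K,C)-quasi-isometry on ℝ for some K ≥ 1, C ≥ 0, and such that g(x) → +∞ as x → +∞. Let f : ℝ → ℝ satisfy (f(x) − x)/x → 0 as x → +∞. Then (g'(f(g(x))) − x)/x → 0 as x → +∞. (This is the normality of the subgroup H in QI(ℝ₊): conjugates of elements of H by quasi-isometries lie in H.) -/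
open Filter

/-- `f` is a `(K,C)`-quasi-isometry on the set `S ⊆ ℝ`. -/
def IsQIOn (K C : ℝ) (f : ℝ → ℝ) (S : Set ℝ) : Prop :=
  ∀ x ∈ S, ∀ y ∈ S,
    (1 / K) * |x - y| - C ≤ |f x - f y| ∧ |f x - f y| ≤ K * |x - y| + C

theorem stmt_2 (g g' f : ℝ → ℝ)
    (hgg' : Function.LeftInverse g' g) (hg'g : Function.RightInverse g' g)
    (K C : ℝ) (hK : 1 ≤ K) (hC : 0 ≤ C)
    (hg'QI : IsQIOn K C g' Set.univ)
    (hgtop : Tendsto g atTop atTop)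
    (hf : Tendsto (fun x : ℝ => (f x - x) / x) atTop (nhds 0)) :
    Tendsto (fun x : ℝ => (g' (f (g x)) - x) / x) atTop (nhds 0) := by
  have hKpos : (0 : ℝ) < K := lt_of_lt_of_le one_pos hK
  set M := K + K * C + |g 0| with hM
  have hMpos : 0 < M := by positivity
  -- Step 1: |f (g x) - g x| / x → 0
  have h1 : Tendsto (fun x => |f (g x) - g x| / x) atTop (nhds 0) := by
    have h0 : Tendsto (fun x => |(f (g x) - g x) / g x| * M) atTop (nhds 0) := by
      have hc : Tendsto (fun x => (f (g x) - g x) / g x) atTop (nhds 0) := hf.comp hgtop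
      simpa using hc.abs.mul_const M
    apply squeeze_zero' _ _ h0
    · filter_upwards [eventually_gt_atTop (0 : ℝ)] with x hx
      exact div_nonneg (abs_nonneg _) hx.le
    filter_upwards [eventually_ge_atTop (1 : ℝ), hgtop.eventually_gt_atTop 0] with x hx hgx
    have hxpos : (0 : ℝ) < x := lt_of_lt_of_le one_pos hx
    have hgb : g x ≤ M * x := by
      have hq := (hg'QI (g x) trivial (g 0) trivial).1
      rw [hgg' x, hgg' 0] at hq
      rw [sub_zero, abs_of_pos hxpos] at hq
      have h2 : |g x - g 0| ≤ K * (x + C) := by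
        have : (1 / K) * |g x - g 0| ≤ x + C := by linarith
        calc |g x - g 0| = K * ((1 / K) * |g x - g 0|) := by field_simp
          _ ≤ K * (x + C) := by nlinarith [abs_nonneg (g x - g 0)]
      have h3 : g x ≤ |g x - g 0| + |g 0| := by
        have := le_abs_self (g x)
        have := abs_sub_abs_le_abs_sub (g x) (g 0)
        linarith
      have hg0 : 0 ≤ |g 0| := abs_nonneg _
      nlinarith [mul_le_mul_of_nonneg_left hx (mul_nonneg hKpos.le hC),
        mul_le_mul_of_nonneg_left hx hg0]
    rw [abs_div, abs_of_pos hgx, div_mul_eq_mul_div, div_le_div_iff₀ hxpos hgx]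
    nlinarith [abs_nonneg (f (g x) - g x)]
  -- Step 2
  rw [tendsto_zero_iff_abs_tendsto_zero]
  have hub : Tendsto (fun x => K * (|f (g x) - g x| / x) + C / x) atTop (nhds 0) := by
    have hCx : Tendsto (fun x : ℝ => C / x) atTop (nhds 0) := by
      simpa [div_eq_mul_inv] using tendsto_inv_atTop_zero.const_mul C
    simpa using (h1.const_mul K).add hCx
  apply squeeze_zero' (Eventually.of_forall fun x => abs_nonneg _) _ hub
  filter_upwards [eventually_gt_atTop (0 : ℝ)] with x hx
  have hq := (hg'QI (f (g x)) trivial (g x) trivial).2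
  rw [hgg' x] at hq
  rw [abs_div, abs_of_pos hx]
  calc |g' (f (g x)) - x| / x ≤ (K * |f (g x) - g x| + C) / x := by gcongr
    _ = K * (|f (g x) - g x| / x) + C / x := by ring
end

section
/- Let f : ℝ → ℝ satisfy f(x + 1) = f(x) + 1 for all x ∈ ℝ, and suppose there exists x₀ ∈ ℝ with f(x₀) ≠ x₀. Then |exp(f(x₀ + n)) − exp(x₀ + n)| → +∞ as n → ∞ (n ranging over natural numbers). In particular, the conjugate h∘f∘h⁻¹ of f by the exponential map h(x) = e^x is not at bounded distance from the identity, so f represents a nontrivial element of the quasi-isometry group QI(ℝ). -/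
open Filter

theorem stmt_5 (f : ℝ → ℝ) (hper : ∀ x : ℝ, f (x + 1) = f x + 1)
    (x₀ : ℝ) (hx₀ : f x₀ ≠ x₀) :
    Tendsto (fun n : ℕ => |Real.exp (f (x₀ + n)) - Real.exp (x₀ + n)|) atTop atTop := by
  have hn : ∀ n : ℕ, f (x₀ + n) = f x₀ + n := by
    intro n
    induction n with
    | zero => simp
    | succ k ih => push_cast; rw [← add_assoc, hper, ih]; ring
  have hc : (0:ℝ) < |Real.exp (f x₀) - Real.exp x₀| := by
    rw [abs_pos, sub_ne_zero]
    exact fun h => hx₀ (Real.exp_injective h)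
  have heq : ∀ n : ℕ, |Real.exp (f (x₀ + n)) - Real.exp (x₀ + n)|
      = |Real.exp (f x₀) - Real.exp x₀| * Real.exp n := by
    intro n
    rw [hn n, Real.exp_add, Real.exp_add, ← sub_mul, abs_mul, abs_of_pos (Real.exp_pos _)]
  simp only [heq]
  exact (Real.tendsto_exp_atTop.comp tendsto_natCast_atTop_atTop).const_mul_atTop hc
end

section
/- For t > 0, i ≥ 1 and s ∈ ℝ, define A_t(x) = t·x and B_{i,s}(x) = x + s·x^{1/(i+1)} (real power) for x ≥ 0. Then: (a) there exist K ≥ 1 and C ≥ 0 such that B_{i,s} is a (K,C)-quasi-isometry on [0,∞); and (b) for all x ≥ 0, A_t(B_{i,s}(x/t)) = x + s·t^{i/(i+1)}·x^{1/(i+1)}, i.e., A_t∘B_{i,s}∘A_t⁻¹ = B_{i, s·t^{i/(i+1)}} as maps on [0,∞). -/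
/-- The map `B_{i,s}(x) = x + s·x^{1/(i+1)}` (real power). -/
noncomputable def Bmap (i s : ℝ) (x : ℝ) : ℝ := x + s * x ^ ((1 : ℝ) / (i + 1))

/-!
`B_{i,s}` is the identity perturbed by `g x = s * x ^ α` with `α = 1 / (i + 1) < 1`. Subadditivity
of `r ↦ r ^ α` makes `g` `α`-Hölder on `[0, ∞)`, and by weighted AM–GM a term `c * r ^ α` with
`α < 1` is absorbed into `r / 2` plus a constant, so `id + g` is a `(2, C)`-quasi-isometry.
The conjugation formula is the homogeneity `(x / t) ^ α = x ^ α / t ^ α`.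
-/

lemma abs_rpow_sub_rpow_le {p x y : ℝ} (hp0 : 0 ≤ p) (hp1 : p ≤ 1) (hx : 0 ≤ x) (hy : 0 ≤ y) :
    |x ^ p - y ^ p| ≤ |x - y| ^ p := by
  wlog hyx : y ≤ x generalizing x y
  · rw [abs_sub_comm, abs_sub_comm x]
    exact this hy hx (le_of_not_ge hyx)
  have hsub := Real.rpow_add_le_add_rpow (sub_nonneg.2 hyx) hy hp0 hp1
  rw [sub_add_cancel] at hsub
  rw [abs_of_nonneg (sub_nonneg.2 (Real.rpow_le_rpow hy hyx hp0)),
    abs_of_nonneg (sub_nonneg.2 hyx)]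
  linarith

lemma exists_mul_rpow_le_mul_add {c p ε : ℝ} (hc : 0 ≤ c) (hp0 : 0 ≤ p) (hp1 : p < 1)
    (hε : 0 < ε) : ∃ D, 0 ≤ D ∧ ∀ r, 0 ≤ r → c * r ^ p ≤ ε * r + D := by
  set M := (c / ε ^ p) ^ (1 - p)⁻¹
  refine ⟨M, by positivity, fun r hr => ?_⟩
  have hM : M ^ (1 - p) = c / ε ^ p := Real.rpow_inv_rpow (by positivity) (by linarith)
  calc c * r ^ p = (ε * r) ^ p * M ^ (1 - p) := by
        rw [hM, Real.mul_rpow hε.le hr]; field_simp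
    _ ≤ p * (ε * r) + (1 - p) * M :=
        Real.geom_mean_le_arith_mean2_weighted hp0 (by linarith) (by positivity)
          (by positivity) (add_sub_cancel p 1)
    _ ≤ ε * r + M := by nlinarith [mul_nonneg hε.le hr, (by positivity : 0 ≤ M)]

theorem isQIOn_two_add_of_abs_sub_le_rpow {g : ℝ → ℝ} {S : Set ℝ} {c p : ℝ} (hc : 0 ≤ c)
    (hp0 : 0 ≤ p) (hp1 : p < 1) (hg : ∀ x ∈ S, ∀ y ∈ S, |g x - g y| ≤ c * |x - y| ^ p) :
    ∃ C, 0 ≤ C ∧ IsQIOn 2 C (fun x => x + g x) S := by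
  obtain ⟨D, hD, hbound⟩ := exists_mul_rpow_le_mul_add hc hp0 hp1 (one_half_pos (α := ℝ))
  refine ⟨D, hD, fun x hx y hy => ?_⟩
  have hgxy := (hg x hx y hy).trans (hbound _ (abs_nonneg (x - y)))
  have hsplit : x + g x - (y + g y) = (x - y) + (g x - g y) := by ring
  rw [hsplit]
  constructor
  · linarith [abs_sub_abs_le_abs_add (x - y) (g x - g y)]
  · linarith [abs_add_le (x - y) (g x - g y), abs_nonneg (x - y)]

lemma mul_Bmap_div (s : ℝ) {t i x : ℝ} (ht : 0 < t) (hi : i + 1 ≠ 0) (hx : 0 ≤ x) :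
    t * Bmap i s (x / t) = x + s * t ^ (i / (i + 1)) * x ^ ((1 : ℝ) / (i + 1)) := by
  have hexp : i / (i + 1) = 1 - 1 / (i + 1) := by field_simp; ring
  rw [hexp, Real.rpow_sub ht, Real.rpow_one, Bmap, Real.div_rpow hx ht.le]
  field_simp

theorem stmt_7 (t i s : ℝ) (ht : 0 < t) (hi : 1 ≤ i) :
    (∃ K C : ℝ, 1 ≤ K ∧ 0 ≤ C ∧ IsQIOn K C (Bmap i s) (Set.Ici 0)) ∧
    (∀ x ∈ Set.Ici (0 : ℝ),
      t * Bmap i s (x / t) = x + s * t ^ (i / (i + 1)) * x ^ ((1 : ℝ) / (i + 1))) := by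
  have hα0 : (0 : ℝ) ≤ 1 / (i + 1) := by positivity
  have hα1 : 1 / (i + 1) < 1 := by rw [div_lt_one (by linarith)]; linarith
  refine ⟨?_, fun x hx => mul_Bmap_div s ht (by linarith) hx⟩
  obtain ⟨C, hC, hqi⟩ := isQIOn_two_add_of_abs_sub_le_rpow (abs_nonneg s) hα0 hα1
    (g := fun x => s * x ^ ((1 : ℝ) / (i + 1))) (S := Set.Ici 0) fun x hx y hy => by
      rw [← mul_sub, abs_mul]
      exact mul_le_mul_of_nonneg_left (abs_rpow_sub_rpow_le hα0 hα1.le hx hy) (abs_nonneg s)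
  exact ⟨2, C, one_le_two, hC, hqi⟩
end

section
/- For i ≥ 1 and s₁, s₂ ∈ ℝ, let B_{i,s}(x) = x + s·x^{1/(i+1)} (real power). There exist x₀ ≥ 0 and C ≥ 0 such that for all x ≥ x₀, |B_{i,s₁}(B_{i,s₂}(x)) − B_{i,s₁+s₂}(x)| ≤ C. Hence B_{i,s₁}∘B_{i,s₂} and B_{i,s₁+s₂} are at bounded distance and represent the same element of QI(ℝ₊), so s ↦ [B_{i,s}] is a group homomorphism from (ℝ,+). -/
theorem stmt_8 (i s₁ s₂ : ℝ) (hi : 1 ≤ i) :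
    ∃ x₀ C : ℝ, 0 ≤ x₀ ∧ 0 ≤ C ∧ ∀ x : ℝ, x₀ ≤ x →
      |Bmap i s₁ (Bmap i s₂ x) - Bmap i (s₁ + s₂) x| ≤ C := by
  set α : ℝ := (1 : ℝ) / (i + 1) with hα
  have hi0 : (0:ℝ) < i + 1 := by linarith
  have hα0 : 0 < α := by positivity
  have hα2 : α ≤ 1/2 := by
    rw [hα, div_le_div_iff₀ hi0 (by norm_num)]
    linarith
  have hα1 : α ≤ 1 := by linarith
  refine ⟨1 + s₂ ^ 2, |s₁| * |s₂|, by positivity, by positivity, fun x hx => ?_⟩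
  have hx1 : (1:ℝ) ≤ x := by nlinarith [sq_nonneg s₂]
  have hx0 : (0:ℝ) < x := by linarith
  set u : ℝ := s₂ * x ^ (α - 1) with hu
  have hxu : x * u = s₂ * x ^ α := by
    rw [hu]
    have h : x * x ^ (α - 1) = x ^ α := by
      nth_rewrite 1 [← Real.rpow_one x]
      rw [← Real.rpow_add hx0]; ring_nf
    calc x * (s₂ * x ^ (α - 1)) = s₂ * (x * x ^ (α - 1)) := by ring
      _ = s₂ * x ^ α := by rw [h]
  have habsu : |u| ≤ |s₂| * x ^ (α - 1) := by
    rw [hu, abs_mul, abs_of_nonneg (Real.rpow_nonneg hx0.le _)]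
  have habs : |u| ≤ 1 := by
    have h3 : |s₂| ≤ x ^ ((1:ℝ)/2) := by
      rw [← Real.sqrt_sq_eq_abs, Real.sqrt_eq_rpow]
      exact Real.rpow_le_rpow (sq_nonneg s₂) (by linarith) (by norm_num)
    have h2 : x ^ (α - 1) ≤ x ^ (-(1:ℝ)/2) :=
      Real.rpow_le_rpow_of_exponent_le hx1 (by linarith)
    calc |u| ≤ |s₂| * x ^ (α - 1) := habsu
      _ ≤ x ^ ((1:ℝ)/2) * x ^ (-(1:ℝ)/2) := by
          apply mul_le_mul h3 h2 (Real.rpow_nonneg hx0.le _) (Real.rpow_nonneg hx0.le _)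
      _ = x ^ ((1:ℝ)/2 + -(1:ℝ)/2) := (Real.rpow_add hx0 _ _).symm
      _ = 1 := by norm_num
  have h1u : (0:ℝ) ≤ 1 + u := by
    have := abs_le.mp habs
    linarith [this.1]
  -- key bound on |(1+u)^α - 1|
  have hkey : |(1 + u) ^ α - 1| ≤ |u| := by
    have hub : (1 + u) ^ α - 1 ≤ |u| := by
      have := rpow_one_add_le_one_add_mul_self (s := u) (by linarith [(abs_le.mp habs).1])
        hα0.le hα1
      have h4 : α * u ≤ |u| := by
        calc α * u ≤ |α * u| := le_abs_self _
          _ = α * |u| := by rw [abs_mul, abs_of_nonneg hα0.le]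
          _ ≤ 1 * |u| := by nlinarith [abs_nonneg u]
          _ = |u| := one_mul _
      linarith
    have hlb : -|u| ≤ (1 + u) ^ α - 1 := by
      rcases le_or_gt 0 u with h | h
      · have : (1:ℝ) ≤ (1 + u) ^ α := by
          calc (1:ℝ) = 1 ^ α := (Real.one_rpow α).symm
            _ ≤ (1 + u) ^ α := Real.rpow_le_rpow (by norm_num) (by linarith) hα0.le
        have := abs_nonneg u
        linarith
      · rcases eq_or_lt_of_le h1u with h0 | h0
        · have hu1 : u = -1 := by linarith
          rw [← h0, Real.zero_rpow hα0.ne', hu1]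
          norm_num
        · have : (1 + u) ^ (1:ℝ) ≤ (1 + u) ^ α :=
            Real.rpow_le_rpow_of_exponent_ge h0 (by linarith) hα1
          rw [Real.rpow_one] at this
          have : u ≤ (1 + u) ^ α - 1 := by linarith
          have hau : |u| = -u := abs_of_neg h
          linarith
    exact abs_le.mpr ⟨hlb, hub⟩
  -- rewrite the difference
  have hform : Bmap i s₁ (Bmap i s₂ x) - Bmap i (s₁ + s₂) x
      = s₁ * (x ^ α * ((1 + u) ^ α - 1)) := by
    have hy : Bmap i s₂ x = x * (1 + u) := by
      simp only [Bmap, ← hα]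
      rw [mul_add, mul_one, hxu]
    have hyr : (x * (1 + u)) ^ α = x ^ α * (1 + u) ^ α :=
      Real.mul_rpow hx0.le h1u
    rw [hy]
    simp only [Bmap, ← hα]
    rw [hyr, mul_add x 1 u, mul_one, hxu]
    ring
  rw [hform, abs_mul, abs_mul, abs_of_nonneg (Real.rpow_nonneg hx0.le α)]
  have hxa : x ^ α * |(1 + u) ^ α - 1| ≤ |s₂| := by
    calc x ^ α * |(1 + u) ^ α - 1| ≤ x ^ α * (|s₂| * x ^ (α - 1)) := by
          apply mul_le_mul_of_nonneg_left (le_trans hkey habsu) (Real.rpow_nonneg hx0.le _)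
      _ = |s₂| * (x ^ α * x ^ (α - 1)) := by ring
      _ = |s₂| * x ^ (α + (α - 1)) := by rw [Real.rpow_add hx0]
      _ ≤ |s₂| * 1 := by
          apply mul_le_mul_of_nonneg_left _ (abs_nonneg s₂)
          exact Real.rpow_le_one_of_one_le_of_nonpos hx1 (by linarith)
      _ = |s₂| := mul_one _
  calc |s₁| * (x ^ α * |(1 + u) ^ α - 1|) ≤ |s₁| * |s₂| :=
    mul_le_mul_of_nonneg_left hxa (abs_nonneg s₁)
end

section
/- For i, j ≥ 1 with i ≠ j and s₁, s₂ ∈ ℝ, let B_{i,s}(x) = x + s·x^{1/(i+1)} (real power). There exist x₀ ≥ 0 and C ≥ 0 such that for all x ≥ x₀, |B_{i,s₁}(B_{j,s₂}(x)) − B_{j,s₂}(B_{i,s₁}(x))| ≤ C. Hence the classes [B_{i,s₁}] and [B_{j,s₂}] commute in QI(ℝ₊). -/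
open Filter Real

lemma rpow_mvt {p c x y : ℝ} (hp : 0 < p) (hp1 : p ≤ 1) (hc : 0 < c)
    (hx : c ≤ x) (hy : c ≤ y) :
    |y ^ p - x ^ p| ≤ p * c ^ (p - 1) * |y - x| := by
  have key := Convex.norm_image_sub_le_of_norm_hasDerivWithin_le
    (f := fun t : ℝ => t ^ p) (f' := fun t : ℝ => p * t ^ (p - 1))
    (s := Set.Ici c) (C := p * c ^ (p - 1)) ?_ ?_ (convex_Ici c) hx hy
  · simpa [Real.norm_eq_abs] using key
  · intro t ht
    exact (Real.hasDerivAt_rpow_const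
      (Or.inl (ne_of_gt (lt_of_lt_of_le hc ht)))).hasDerivWithinAt
  · intro t ht
    have htc : c ≤ t := ht
    have h1 : t ^ (p - 1) ≤ c ^ (p - 1) :=
      Real.rpow_le_rpow_of_nonpos hc htc (by linarith)
    have h0 : (0:ℝ) ≤ t ^ (p - 1) :=
      Real.rpow_nonneg (le_of_lt (lt_of_lt_of_le hc htc)) _
    show ‖p * t ^ (p - 1)‖ ≤ p * c ^ (p - 1)
    rw [Real.norm_eq_abs, abs_of_nonneg (by positivity)]
    nlinarith

lemma rpow_pert {p x u : ℝ} (hp : 0 < p) (hp1 : p ≤ 1) (hx : 0 < x) (hu : |u| ≤ x / 2) :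
    |(x + u) ^ p - x ^ p| ≤ p * 2 ^ (1 - p) * x ^ (p - 1) * |u| := by
  have h1 : x / 2 ≤ x + u := by
    have := abs_le.mp hu; linarith [this.1]
  have h2 : x / 2 ≤ x := by linarith
  have key := rpow_mvt hp hp1 (by linarith : (0:ℝ) < x / 2) h2 h1
  have hrw : (x / 2) ^ (p - 1) = 2 ^ (1 - p) * x ^ (p - 1) := by
    rw [Real.div_rpow hx.le (by norm_num), div_eq_mul_inv,
      ← Real.rpow_neg (by norm_num : (0:ℝ) ≤ 2),
      (by ring : -(p - 1) = 1 - p), mul_comm]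
  have h3 : x + u - x = u := by ring
  rw [hrw, h3] at key
  calc |(x + u) ^ p - x ^ p| ≤ p * (2 ^ (1 - p) * x ^ (p - 1)) * |u| := key
    _ = p * 2 ^ (1 - p) * x ^ (p - 1) * |u| := by ring

theorem stmt_9 (i j s₁ s₂ : ℝ) (hi : 1 ≤ i) (hj : 1 ≤ j) (hij : i ≠ j) :
    ∃ x₀ C : ℝ, 0 ≤ x₀ ∧ 0 ≤ C ∧ ∀ x : ℝ, x₀ ≤ x →
      |Bmap i s₁ (Bmap j s₂ x) - Bmap j s₂ (Bmap i s₁ x)| ≤ C := by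
  have hia : (0:ℝ) < i + 1 := by linarith
  have hjb : (0:ℝ) < j + 1 := by linarith
  set a : ℝ := (1:ℝ) / (i + 1) with ha_def
  set b : ℝ := (1:ℝ) / (j + 1) with hb_def
  have ha0 : 0 < a := by positivity
  have hb0 : 0 < b := by positivity
  have ha1 : a ≤ 1 := by rw [ha_def, div_le_one hia]; linarith
  have hb1 : b ≤ 1 := by rw [hb_def, div_le_one hjb]; linarith
  have hab : a + b < 1 := by
    rw [ha_def, hb_def, div_add_div _ _ (ne_of_gt hia) (ne_of_gt hjb),
      div_lt_one (by positivity)]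
    rcases lt_or_gt_of_ne hij with h | h <;> nlinarith
  set K : ℝ := |s₁| * (a * 2 ^ (1 - a) * |s₂|) + |s₂| * (b * 2 ^ (1 - b) * |s₁|) with hK
  have E1 : ∀ᶠ x : ℝ in Filter.atTop, 2 * |s₁| ≤ x ^ (1 - a) :=
    (tendsto_rpow_atTop (by linarith)).eventually_ge_atTop _
  have E2 : ∀ᶠ x : ℝ in Filter.atTop, 2 * |s₂| ≤ x ^ (1 - b) :=
    (tendsto_rpow_atTop (by linarith)).eventually_ge_atTop _
  have E4 : ∀ᶠ x : ℝ in Filter.atTop, K * x ^ (a + b - 1) < 1 := by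
    have h := (tendsto_rpow_neg_atTop (show (0:ℝ) < 1 - (a + b) by linarith)).const_mul K
    rw [mul_zero] at h
    filter_upwards [h.eventually (gt_mem_nhds one_pos)] with x hx
    have : a + b - 1 = -(1 - (a + b)) := by ring
    rw [this]; exact hx
  obtain ⟨x₀, hx₀⟩ := Filter.eventually_atTop.mp ((E1.and E2).and E4)
  refine ⟨max x₀ 1, 1, le_trans zero_le_one (le_max_right _ _), zero_le_one, fun x hx => ?_⟩
  have hx1 : (1:ℝ) ≤ x := le_trans (le_max_right _ _) hx
  have hx0 : (0:ℝ) < x := by linarith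
  obtain ⟨⟨h1, h2⟩, h4⟩ := hx₀ x (le_trans (le_max_left _ _) hx)
  -- bounds on perturbations
  have hxa : x ^ (1 - a) * x ^ a = x := by
    rw [← Real.rpow_add hx0, show 1 - a + a = 1 by ring, Real.rpow_one]
  have hxb : x ^ (1 - b) * x ^ b = x := by
    rw [← Real.rpow_add hx0, show 1 - b + b = 1 by ring, Real.rpow_one]
  have e2 : |s₁ * x ^ a| = |s₁| * x ^ a := by
    rw [abs_mul, abs_of_nonneg (Real.rpow_nonneg hx0.le _)]
  have e1 : |s₂ * x ^ b| = |s₂| * x ^ b := by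
    rw [abs_mul, abs_of_nonneg (Real.rpow_nonneg hx0.le _)]
  have hu1 : |s₁ * x ^ a| ≤ x / 2 := by
    rw [e2]
    have := mul_le_mul_of_nonneg_right h1 (Real.rpow_nonneg hx0.le a)
    rw [hxa] at this; linarith
  have hu2 : |s₂ * x ^ b| ≤ x / 2 := by
    rw [e1]
    have := mul_le_mul_of_nonneg_right h2 (Real.rpow_nonneg hx0.le b)
    rw [hxb] at this; linarith
  have p1 := rpow_pert ha0 ha1 hx0 hu2
  have p2 := rpow_pert hb0 hb1 hx0 hu1
  have hdiff : Bmap i s₁ (Bmap j s₂ x) - Bmap j s₂ (Bmap i s₁ x)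
      = s₁ * ((x + s₂ * x ^ b) ^ a - x ^ a) - s₂ * ((x + s₁ * x ^ a) ^ b - x ^ b) := by
    simp only [Bmap, ← ha_def, ← hb_def]; ring
  have e3 : x ^ (a - 1) * x ^ b = x ^ (a + b - 1) := by
    rw [← Real.rpow_add hx0]; congr 1; ring
  have e4 : x ^ (b - 1) * x ^ a = x ^ (a + b - 1) := by
    rw [← Real.rpow_add hx0]; congr 1; ring
  calc |Bmap i s₁ (Bmap j s₂ x) - Bmap j s₂ (Bmap i s₁ x)|
      = |s₁ * ((x + s₂ * x ^ b) ^ a - x ^ a) - s₂ * ((x + s₁ * x ^ a) ^ b - x ^ b)| := by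
        rw [hdiff]
    _ ≤ |s₁| * |(x + s₂ * x ^ b) ^ a - x ^ a| + |s₂| * |(x + s₁ * x ^ a) ^ b - x ^ b| := by
        refine (abs_sub _ _).trans ?_
        rw [abs_mul, abs_mul]
    _ ≤ |s₁| * (a * 2 ^ (1 - a) * x ^ (a - 1) * |s₂ * x ^ b|)
        + |s₂| * (b * 2 ^ (1 - b) * x ^ (b - 1) * |s₁ * x ^ a|) :=
        add_le_add (mul_le_mul_of_nonneg_left p1 (abs_nonneg s₁))
          (mul_le_mul_of_nonneg_left p2 (abs_nonneg s₂))
    _ = |s₁| * (a * 2 ^ (1 - a) * |s₂|) * (x ^ (a - 1) * x ^ b)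
        + |s₂| * (b * 2 ^ (1 - b) * |s₁|) * (x ^ (b - 1) * x ^ a) := by
        rw [e1, e2]; ring
    _ = K * x ^ (a + b - 1) := by rw [e3, e4, hK]; ring
    _ ≤ 1 := h4.le
end

section
/- Let i, j ≥ 1 with i ≠ j and s, s' ∈ ℝ, and let B_{i,s}(x) = x + s·x^{1/(i+1)} (real power). If there exist x₀ ≥ 0 and C ≥ 0 such that |B_{i,s}(B_{j,s'}(x)) − x| ≤ C for all x ≥ x₀, then s = 0 and s' = 0. (This is the independence of the generators B_{i,s}: the subgroup of QI(ℝ₊) they generate is a direct sum ⊕_{i∈[1,∞)} ℝ.) -/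
open Filter Real Topology

private lemma boundedRatio {g : ℝ → ℝ} {C m : ℝ} (hm : 0 < m)
    (hC : ∀ᶠ x in atTop, |g x| ≤ C) :
    Tendsto (fun x => g x / x ^ m) atTop (𝓝 0) := by
  apply squeeze_zero_norm' (a := fun x : ℝ => C * x ^ (-m))
  · filter_upwards [hC, eventually_gt_atTop (0:ℝ)] with x hx hx0
    have hxm : 0 < x ^ m := Real.rpow_pos_of_pos hx0 m
    rw [Real.norm_eq_abs, abs_div, abs_of_pos hxm, Real.rpow_neg hx0.le, ← div_eq_mul_inv]
    gcongr
  · simpa using (tendsto_rpow_neg_atTop hm).const_mul C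

private lemma single_coeff {g : ℝ → ℝ} {C c m : ℝ} (hm : 0 < m)
    (hC : ∀ᶠ x in atTop, |g x| ≤ C)
    (hg : ∀ᶠ x in atTop, g x = c * x ^ m) : c = 0 := by
  have h1 : Tendsto (fun x => g x / x ^ m) atTop (𝓝 c) := by
    apply Tendsto.congr' _ (tendsto_const_nhds (α := ℝ) (x := c))
    filter_upwards [hg, eventually_gt_atTop (0:ℝ)] with x hgx hx0
    rw [hgx, mul_div_assoc, div_self (Real.rpow_pos_of_pos hx0 m).ne', mul_one]
  exact tendsto_nhds_unique h1 (boundedRatio hm hC)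

private lemma sandwich (c : ℝ) {a : ℝ} (ha1 : a < 1) :
    ∀ᶠ x : ℝ in atTop, 0 < x ∧ x / 2 ≤ x + c * x ^ a ∧ x + c * x ^ a ≤ 2 * x := by
  have h0 : Tendsto (fun x : ℝ => |c| * x ^ (a - 1)) atTop (𝓝 0) := by
    have := (tendsto_rpow_neg_atTop (show 0 < 1 - a by linarith)).const_mul |c|
    simpa [neg_sub] using this
  have h0' : ∀ᶠ x : ℝ in atTop, |c| * x ^ (a - 1) ≤ 1 / 2 :=
    h0.eventually_le_const (by norm_num)
  filter_upwards [h0', eventually_gt_atTop (0:ℝ)] with x hx hx0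
  have hxa : x ^ a = x ^ (a - 1) * x := by
    have := Real.rpow_add_one hx0.ne' (a - 1)
    simpa using this
  have hkey : |c| * x ^ a ≤ x / 2 := by
    calc |c| * x ^ a = (|c| * x ^ (a - 1)) * x := by rw [hxa]; ring
      _ ≤ (1 / 2) * x := mul_le_mul_of_nonneg_right hx hx0.le
      _ = x / 2 := by ring
  have hxa0 : 0 ≤ x ^ a := Real.rpow_nonneg hx0.le a
  have h1 : -(x / 2) ≤ c * x ^ a := by
    have h := mul_le_mul_of_nonneg_right (neg_abs_le c) hxa0
    linarith
  have h2 : c * x ^ a ≤ x / 2 := by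
    have h := mul_le_mul_of_nonneg_right (le_abs_self c) hxa0
    linarith
  exact ⟨hx0, by linarith, by linarith⟩

private lemma main_lemma {a b s s' C : ℝ} (ha0 : 0 < a) (ha1 : a < 1) (hb0 : 0 < b)
    (hb1 : b < 1) (hab : a ≠ b)
    (hbd : ∀ᶠ x : ℝ in atTop, |s' * x ^ a + s * (x + s' * x ^ a) ^ b| ≤ C) :
    s = 0 ∧ s' = 0 := by
  set g : ℝ → ℝ := fun x => s' * x ^ a + s * (x + s' * x ^ a) ^ b with hg_def
  rcases lt_or_gt_of_ne hab with hlt | hgt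
  · -- a < b : dominant term exponent b with coefficient s
    have inner : Tendsto (fun x : ℝ => 1 + s' * x ^ (a - 1)) atTop (𝓝 1) := by
      have h : Tendsto (fun x : ℝ => s' * x ^ (a - 1)) atTop (𝓝 0) := by
        simpa [neg_sub] using
          (tendsto_rpow_neg_atTop (show 0 < 1 - a by linarith)).const_mul s'
      have h2 : Tendsto (fun x : ℝ => 1 + s' * x ^ (a - 1)) atTop (𝓝 (1 + 0)) :=
        tendsto_const_nhds.add h
      simpa using h2
    have key1 : Tendsto (fun x : ℝ => (x + s' * x ^ a) ^ b / x ^ b) atTop (𝓝 1) := by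
      have h1 : Tendsto (fun x : ℝ => (1 + s' * x ^ (a - 1)) ^ b) atTop (𝓝 1) := by
        have := inner.rpow (tendsto_const_nhds (x := b)) (Or.inl one_ne_zero)
        simpa using this
      apply h1.congr'
      filter_upwards [sandwich s' ha1] with x ⟨hx0, hlo, hhi⟩
      have hnum : (0:ℝ) ≤ x + s' * x ^ a := by linarith
      rw [← Real.div_rpow hnum hx0.le]
      congr 1
      have hxa : x ^ a = x ^ (a - 1) * x := by
        have := Real.rpow_add_one hx0.ne' (a - 1)
        simpa using this
      rw [hxa]; field_simp
    have key2 : Tendsto (fun x => g x / x ^ b) atTop (𝓝 s) := by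
      have haux : Tendsto (fun x : ℝ => s' * x ^ (a - b) + s * ((x + s' * x ^ a) ^ b / x ^ b))
          atTop (𝓝 s) := by
        have h1 : Tendsto (fun x : ℝ => s' * x ^ (a - b)) atTop (𝓝 0) := by
          simpa [neg_sub] using
            (tendsto_rpow_neg_atTop (show 0 < b - a by linarith)).const_mul s'
        have h2 := key1.const_mul s
        have := h1.add h2
        simpa using this
      apply haux.congr'
      filter_upwards [eventually_gt_atTop (0:ℝ)] with x hx0
      have hxb : (0:ℝ) < x ^ b := Real.rpow_pos_of_pos hx0 b
      have hxab : x ^ (a - b) = x ^ a / x ^ b := Real.rpow_sub hx0 a b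
      simp only [hg_def]
      rw [hxab]
      field_simp
    have hs : s = 0 := tendsto_nhds_unique key2 (boundedRatio hb0 hbd)
    refine ⟨hs, ?_⟩
    apply single_coeff ha0 hbd
    filter_upwards with x
    simp [hs]
  · -- b < a : dominant term exponent a with coefficient s'
    have key1 : Tendsto (fun x : ℝ => (x + s' * x ^ a) ^ b / x ^ a) atTop (𝓝 0) := by
      apply squeeze_zero' (g := fun x : ℝ => 2 ^ b * x ^ (b - a))
      · filter_upwards [sandwich s' ha1] with x ⟨hx0, hlo, hhi⟩
        exact div_nonneg (Real.rpow_nonneg (by linarith) b) (Real.rpow_nonneg hx0.le a)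
      · filter_upwards [sandwich s' ha1] with x ⟨hx0, hlo, hhi⟩
        have h1 : (x + s' * x ^ a) ^ b ≤ (2 * x) ^ b :=
          Real.rpow_le_rpow (by linarith) hhi hb0.le
        have h2 : (2 * x) ^ b = 2 ^ b * x ^ b := Real.mul_rpow (by norm_num) hx0.le
        have h3 : x ^ b / x ^ a = x ^ (b - a) := (Real.rpow_sub hx0 b a).symm
        have hxa : (0:ℝ) < x ^ a := Real.rpow_pos_of_pos hx0 a
        calc (x + s' * x ^ a) ^ b / x ^ a ≤ (2 * x) ^ b / x ^ a := by gcongr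
          _ = 2 ^ b * (x ^ b / x ^ a) := by rw [h2]; ring
          _ = 2 ^ b * x ^ (b - a) := by rw [h3]
      · simpa [neg_sub] using
          (tendsto_rpow_neg_atTop (show 0 < a - b by linarith)).const_mul ((2:ℝ) ^ b)
    have key2 : Tendsto (fun x => g x / x ^ a) atTop (𝓝 s') := by
      have haux : Tendsto (fun x : ℝ => s' + s * ((x + s' * x ^ a) ^ b / x ^ a))
          atTop (𝓝 s') := by
        have := tendsto_const_nhds (α := ℝ) (x := s') |>.add (key1.const_mul s)
        simpa using this
      apply haux.congr'
      filter_upwards [eventually_gt_atTop (0:ℝ)] with x hx0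
      have hxa : (0:ℝ) < x ^ a := Real.rpow_pos_of_pos hx0 a
      simp only [hg_def]
      field_simp
    have hs' : s' = 0 := tendsto_nhds_unique key2 (boundedRatio ha0 hbd)
    refine ⟨?_, hs'⟩
    apply single_coeff hb0 hbd
    filter_upwards with x
    simp [hs']

theorem stmt_10 (i j s s' : ℝ) (hi : 1 ≤ i) (hj : 1 ≤ j) (hij : i ≠ j)
    (h : ∃ x₀ C : ℝ, 0 ≤ x₀ ∧ 0 ≤ C ∧ ∀ x : ℝ, x₀ ≤ x →
      |Bmap i s (Bmap j s' x) - x| ≤ C) :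
    s = 0 ∧ s' = 0 := by
  obtain ⟨x₀, C, hx₀, hC, hbd⟩ := h
  have hj1 : (0:ℝ) < j + 1 := by linarith
  have hi1 : (0:ℝ) < i + 1 := by linarith
  apply main_lemma (a := 1 / (j + 1)) (b := 1 / (i + 1)) (C := C)
  · positivity
  · rw [div_lt_one hj1]; linarith
  · positivity
  · rw [div_lt_one hi1]; linarith
  · intro hEq
    apply hij
    field_simp at hEq
    linarith
  · filter_upwards [eventually_ge_atTop x₀] with x hx
    have := hbd x hx
    simp only [Bmap] at this
    convert this using 2
    ring
end

section
/- Let G be a group containing elements f, g, h with f² = g³, g³ = h⁷ and h⁷ = f·g·h. Then every group homomorphism φ : G → (ℝ,+) satisfies φ(f) = φ(g) = φ(h) = 0. (This shows the lifted (2,3,7)-triangle group admits no nontrivial homomorphism to ℝ, and hence that QI(ℝ₊) is not locally indicable.) -/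
theorem stmt_13 {G : Type*} [Group G] (f g h : G)
    (h1 : f ^ 2 = g ^ 3) (h2 : g ^ 3 = h ^ 7) (h3 : h ^ 7 = f * g * h)
    (φ : G → ℝ) (hφ : ∀ a b : G, φ (a * b) = φ a + φ b) :
    φ f = 0 ∧ φ g = 0 ∧ φ h = 0 := by
  have hone : φ 1 = 0 := by have := hφ 1 1; simp at this; linarith
  have H1 := congrArg φ h1
  have H2 := congrArg φ h2
  have H3 := congrArg φ h3
  simp only [pow_succ, pow_zero, hφ, hone] at H1 H2 H3
  refine ⟨by linarith, by linarith, by linarith⟩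
end

section
/- Let a : {t ∈ ℝ : t > 0} → Homeo(ℝ) satisfy a(t₁t₂) = a(t₁)∘a(t₂) for all t₁, t₂ > 0, and suppose that for every fixed x ∈ ℝ the map t ↦ a(t)(x) is continuous on (0,∞). Let b : ℝ → (ℝ → ℝ) satisfy b(s₁)(b(s₂)(x)) = b(s₁+s₂)(x) for all s₁, s₂, x, and the affine relation a(t)(b(s)(x)) = b(t·s)(a(t)(x)) for all t > 0, s ∈ ℝ, x ∈ ℝ. Suppose there are a continuous map ψ : ℝ → ℝ and a function F : ℝ → ℝ such that ψ(b(s)(x)) = ψ(x) + F(s) for all s ∈ ℝ and x ∈ ℝ. Then F is ℝ-linear: F(s) = s·F(1) for all s ∈ ℝ. -/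
theorem stmt_17 (a : ℝ → (ℝ ≃ₜ ℝ))
    (ha : ∀ t₁ t₂ : ℝ, 0 < t₁ → 0 < t₂ → ∀ x : ℝ, a (t₁ * t₂) x = a t₁ (a t₂ x))
    (hacont : ∀ x : ℝ, ContinuousOn (fun t : ℝ => a t x) (Set.Ioi 0))
    (b : ℝ → (ℝ → ℝ))
    (hb : ∀ s₁ s₂ x : ℝ, b s₁ (b s₂ x) = b (s₁ + s₂) x)
    (hab : ∀ t : ℝ, 0 < t → ∀ s x : ℝ, a t (b s x) = b (t * s) (a t x))
    (ψ : ℝ → ℝ) (hψ : Continuous ψ) (F : ℝ → ℝ)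
    (hsemi : ∀ s x : ℝ, ψ (b s x) = ψ x + F s) :
    ∀ s : ℝ, F s = s * F 1 := by
  -- F is additive
  have hFadd : ∀ s₁ s₂ : ℝ, F (s₁ + s₂) = F s₁ + F s₂ := by
    intro s₁ s₂
    have h1 := hsemi s₁ (b s₂ 0)
    rw [hb, hsemi s₂ 0, hsemi (s₁ + s₂) 0] at h1
    linarith
  have hF0 : F 0 = 0 := by
    have := hFadd 0 0; norm_num at this; linarith
  -- F agrees on Ioi 0 with a continuous function
  have hFrep : ∀ t : ℝ, 0 < t → F t = ψ (a t (b 1 0)) - ψ (a t 0) := by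
    intro t ht
    have h := hab t ht 1 0
    have h2 := hsemi (t * 1) ((a t) 0)
    rw [mul_one] at h h2
    rw [← h] at h2
    linarith
  have hFcontOn : ContinuousOn F (Set.Ioi 0) := by
    apply ContinuousOn.congr (f := fun t => ψ (a t (b 1 0)) - ψ (a t 0))
    · exact ((hψ.comp_continuousOn (hacont (b 1 0))).sub
        (hψ.comp_continuousOn (hacont 0)))
    · intro t ht; exact hFrep t ht
  have hFat1 : ContinuousAt F 1 :=
    hFcontOn.continuousAt (IsOpen.mem_nhds isOpen_Ioi (by norm_num))
  -- continuity everywhere by additivity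
  have hFcont : Continuous F := by
    rw [continuous_iff_continuousAt]
    intro x
    have hx : (0:ℝ) < x + (|x| + 1) := by
      have := abs_nonneg x
      have := neg_abs_le x
      linarith
    have hshift : ∀ s : ℝ, F s = F (s + (|x| + 1)) - F (|x| + 1) := by
      intro s; have := hFadd s (|x| + 1); linarith
    have hc : ContinuousAt (fun s => F (s + (|x| + 1)) - F (|x| + 1)) x := by
      have h1 : ContinuousAt F (x + (|x| + 1)) :=
        hFcontOn.continuousAt (IsOpen.mem_nhds isOpen_Ioi hx)
      have h2 : ContinuousAt (fun s : ℝ => s + (|x| + 1)) x := by fun_prop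
      have hc0 : ContinuousAt (F ∘ fun s : ℝ => s + (|x| + 1)) x := ContinuousAt.comp (x := x) h1 h2
      have hc1 : ContinuousAt (fun s : ℝ => F (s + (|x| + 1))) x := hc0
      exact hc1.sub continuousAt_const
    exact hc.congr (Filter.Eventually.of_forall fun s => (hshift s).symm)
  -- conclude linearity
  intro s
  let f : ℝ →+ ℝ := AddMonoidHom.mk' F hFadd
  have hf : Continuous f := hFcont
  have := (f.toRealLinearMap hf).map_smul s 1
  simp only [AddMonoidHom.coe_toRealLinearMap] at this
  simpa [f, AddMonoidHom.mk'_apply, smul_eq_mul, mul_one, mul_comm] using this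
end
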